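/- Let 0 < k < 4. Let F(t) = (1/(2π)) · ₂F₁(1/2, 1/2; 1; 1 − t²/16), G(t) = (1/(2π)) · ₂F₁(1/2, −1/2; 1; 1 − t²/16), and for integers n ≥ 0 set c_n(k) = ∫_k^4 t^{2n} F(t) dt and d_n(k) = ∫_k^4 t^{2n} log(t) F(t) dt. Then the following three identities hold: (i) 0 = (20/k)·c₀(k) − (3(k²+12)/k³)·c₁(k) + (4/k³)·c₂(k) + (8/k)·d₀(k) − (2/k)·d₁(k) + (8−k²)·log(k)·F(k) + 8·log(k)·G(k); (ii) 0 = (120/k³)·c₀(k) − (30(k²+12)/k⁵)·c₁(k) + (40/k⁵)·c₂(k) − 5·F(k) + (80/k²)·G(k); (iii) 0 = (8/k)·c₀(k) − (2/k)·c₁(k) + (8−k²)·F(k) + 8·G(k). -/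

import Mathlib

open MeasureTheory Real

/-- The Pochhammer symbol `(a)_n = a (a+1) ⋯ (a+n-1)` for a real number `a`. -/
noncomputable def rpoch (a : ℝ) (n : ℕ) : ℝ := ∏ i ∈ Finset.range n, (a + i)

/-- The Gauss hypergeometric series `₂F₁(a,b; c; z)` over the reals. -/
noncomputable def rF21 (a b c z : ℝ) : ℝ :=
  ∑' n : ℕ, (rpoch a n * rpoch b n) / rpoch c n * z ^ n / (n.factorial : ℝ)

/-- `F(t) = (1/(2π)) ₂F₁(1/2, 1/2; 1; 1 - t²/16)`. -/
noncomputable def Fdens (t : ℝ) : ℝ :=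
  (1 / (2 * π)) * rF21 (1/2) (1/2) 1 (1 - t ^ 2 / 16)

/-- `G(t) = (1/(2π)) ₂F₁(1/2, -1/2; 1; 1 - t²/16)`. -/
noncomputable def Gdens (t : ℝ) : ℝ :=
  (1 / (2 * π)) * rF21 (1/2) (-(1/2)) 1 (1 - t ^ 2 / 16)

/-- `c_n(k) = ∫_k^4 t^{2n} F(t) dt`. -/
noncomputable def cInt (n : ℕ) (k : ℝ) : ℝ := ∫ t in k..4, t ^ (2 * n) * Fdens t

/-- `d_n(k) = ∫_k^4 t^{2n} log(t) F(t) dt`. -/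
noncomputable def dInt (n : ℕ) (k : ℝ) : ℝ := ∫ t in k..4, t ^ (2 * n) * Real.log t * Fdens t

/-!
Each identity, cleared of denominators, is a function of `k` that vanishes at `k = 4` (the
integrals are empty and `F(4) = G(4) = 1/(2π)`) and whose derivative vanishes on `(0, 4)`. The
derivatives of `c_n`, `d_n` come from the fundamental theorem of calculus, those of `F`, `G`
from the first-order system
  `t (16 - t²) F' = t² F - 16 G`,  `(16 - t²) G' = t (F - G)`,
which is Gauss's pair of contiguous relations for `₂F₁(1/2, ±1/2; 1; x)` (the classical
derivative formulas of the complete elliptic integrals `K` and `E`) under `x = 1 - t²/16`.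
Identity (iii) is used to eliminate `c₁` when differentiating the others; identity (i) is a
combination of (ii), (iii) and an identity for `16 d₀ - 4 d₁ - (16 c₀ - 4 c₁) log k`, whose
derivative is free of logarithms.
-/

open Set

theorem HasSum.eq_mul_of_succ {R : Type*} [Ring R] [TopologicalSpace R] [IsTopologicalRing R]
    [T2Space R] {f g : ℕ → R} {S T x : R} (hf : HasSum f S) (hg : HasSum g T) (h0 : f 0 = 0)
    (hfg : ∀ n, f (n + 1) = x * g n) : S = x * T :=
  hf.unique <| (hasSum_nat_add_iff' 1).mp <| by simpa [h0, hfg] using hg.mul_left x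

section PowerSeries

variable {c : ℕ → ℝ} {C x : ℝ}

theorem summable_natCast_pow_mul_mul_pow (hc : ∀ n, |c n| ≤ C) (hx : |x| < 1) (k : ℕ) :
    Summable fun n : ℕ => (n : ℝ) ^ k * c n * x ^ n := by
  refine .of_norm_bounded
    ((summable_pow_mul_geometric_of_norm_lt_one k (by rwa [norm_abs_eq_norm])).mul_left C)
    fun n => ?_
  simp only [norm_mul, norm_pow, Real.norm_eq_abs, Nat.abs_cast]
  calc _ ≤ (n : ℝ) ^ k * C * |x| ^ n := by gcongr; exact hc n
    _ = _ := by ring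

theorem summable_mul_pow (hc : ∀ n, |c n| ≤ C) (hx : |x| < 1) :
    Summable fun n : ℕ => c n * x ^ n := by
  simpa using summable_natCast_pow_mul_mul_pow hc hx 0

theorem hasDerivAt_tsum_mul_pow (hc : ∀ n, |c n| ≤ C) (hx : |x| < 1) :
    HasDerivAt (fun y => ∑' n, c n * y ^ n) (∑' n, c n * (n * x ^ (n - 1))) x := by
  obtain ⟨r, hxr, hr1⟩ := exists_between hx
  have hr0 : 0 < r := (abs_nonneg x).trans_lt hxr
  have hx_mem : x ∈ Metric.ball (0 : ℝ) r := by rwa [mem_ball_zero_iff, Real.norm_eq_abs]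
  refine hasDerivAt_tsum_of_isPreconnected
    (((summable_pow_mul_geometric_of_norm_lt_one 1 (r := r)
      (by rwa [Real.norm_of_nonneg hr0.le])).mul_left (C / r)))
    Metric.isOpen_ball (convex_ball 0 r).isPreconnected
    (fun n y _ => (hasDerivAt_pow n y).const_mul (c n)) (fun n y hy => ?_)
    hx_mem (summable_mul_pow hc hx) hx_mem
  rw [mem_ball_zero_iff, Real.norm_eq_abs] at hy
  have hC : 0 ≤ C := (abs_nonneg _).trans (hc 0)
  rcases n with _ | n
  · simp
  simp only [norm_mul, norm_pow, Real.norm_eq_abs, Nat.abs_cast, Nat.add_sub_cancel, pow_one]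
  calc |c (n + 1)| * ((n + 1 : ℕ) * |y| ^ n) ≤ C * ((n + 1 : ℕ) * r ^ n) := by
        gcongr
        exact hc _
    _ = C / r * ((n + 1 : ℕ) * r ^ (n + 1)) := by field_simp; ring

theorem hasSum_natCast_mul_mul_pow (hc : ∀ n, |c n| ≤ C) (hx : |x| < 1) :
    HasSum (fun n : ℕ => n * c n * x ^ n) (x * deriv (fun y => ∑' n, c n * y ^ n) x) := by
  have hterm : ∀ n : ℕ, x * (c n * (n * x ^ (n - 1))) = n * c n * x ^ n := by
    rintro (_ | n)
    · simp
    · rw [Nat.add_sub_cancel, pow_succ]; ring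
  rw [(hasDerivAt_tsum_mul_pow hc hx).deriv, ← tsum_mul_left]
  simp_rw [hterm]
  simpa using (summable_natCast_pow_mul_mul_pow hc hx 1).hasSum

end PowerSeries

section Hypergeometric

variable {a b c x : ℝ}

lemma rpoch_succ (a : ℝ) (n : ℕ) : rpoch a (n + 1) = rpoch a n * (a + n) :=
  Finset.prod_range_succ _ n

lemma rpoch_succ' (a : ℝ) (n : ℕ) : rpoch a (n + 1) = a * rpoch (a + 1) n := by
  rw [rpoch, Finset.prod_range_succ', mul_comm]
  simp only [rpoch, Nat.cast_zero, add_zero, Nat.cast_succ, add_assoc, add_comm (1 : ℝ)]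

lemma abs_rpoch_le_factorial (ha : |a| ≤ 1) (n : ℕ) : |rpoch a n| ≤ n.factorial := by
  rw [rpoch, Finset.abs_prod, ← Finset.prod_range_add_one_eq_factorial, Nat.cast_prod]
  gcongr with i
  push_cast
  exact (abs_add_le _ _).trans (by rw [Nat.abs_cast]; linarith)

lemma factorial_le_rpoch (hc : 1 ≤ c) (n : ℕ) : (n.factorial : ℝ) ≤ rpoch c n := by
  rw [rpoch, ← Finset.prod_range_add_one_eq_factorial, Nat.cast_prod]
  gcongr with i
  push_cast
  linarith

noncomputable def rF21Coeff (a b c : ℝ) (n : ℕ) : ℝ :=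
  rpoch a n * rpoch b n / rpoch c n / n.factorial

lemma rF21_eq_tsum (a b c : ℝ) :
    rF21 a b c = fun z => ∑' n, rF21Coeff a b c n * z ^ n := by
  funext z
  exact tsum_congr fun n => by rw [rF21Coeff]; ring

lemma rF21_zero (a b c : ℝ) : rF21 a b c 0 = 1 := by
  simp only [rF21_eq_tsum]
  rw [tsum_eq_single 0 fun n hn => by simp [hn]]
  simp [rF21Coeff, rpoch]

lemma abs_rF21Coeff_le_one (ha : |a| ≤ 1) (hb : |b| ≤ 1) (hc : 1 ≤ c) (n : ℕ) :
    |rF21Coeff a b c n| ≤ 1 := by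
  have hfac : (0 : ℝ) < n.factorial := by positivity
  have hcn := factorial_le_rpoch hc n
  rw [rF21Coeff, abs_div, abs_div, abs_mul, abs_of_pos (hfac.trans_le hcn), Nat.abs_cast,
    div_div, div_le_one (mul_pos (hfac.trans_le hcn) hfac)]
  exact mul_le_mul ((abs_rpoch_le_factorial ha n).trans hcn) (abs_rpoch_le_factorial hb n)
    (abs_nonneg _) (hfac.le.trans hcn)

lemma rF21Coeff_succ (hc : 0 < c) (n : ℕ) :
    rF21Coeff a b c (n + 1) * ((c + n) * (n + 1)) = rF21Coeff a b c n * ((a + n) * (b + n)) := by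
  have hcn : rpoch c n ≠ 0 := Finset.prod_ne_zero_iff.mpr fun i _ => by positivity
  have : c + n ≠ 0 := by positivity
  simp only [rF21Coeff, rpoch_succ, Nat.factorial_succ, Nat.cast_mul, Nat.cast_succ]
  field_simp

lemma mul_rF21Coeff_add_one (a b c : ℝ) (n : ℕ) :
    b * rF21Coeff a (b + 1) c n = (b + n) * rF21Coeff a b c n := by
  have h : b * rpoch (b + 1) n = rpoch b n * (b + n) := by rw [← rpoch_succ', rpoch_succ]
  simp only [rF21Coeff]
  linear_combination (rpoch a n / rpoch c n / n.factorial) * h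

theorem differentiableAt_rF21 (ha : |a| ≤ 1) (hb : |b| ≤ 1) (hc : 1 ≤ c) (hx : |x| < 1) :
    DifferentiableAt ℝ (rF21 a b c) x := by
  rw [rF21_eq_tsum]
  exact (hasDerivAt_tsum_mul_pow (abs_rF21Coeff_le_one ha hb hc) hx).differentiableAt

theorem mul_deriv_rF21 (ha : |a| ≤ 1) (hb : |b| ≤ 1) (hb' : |b + 1| ≤ 1) (hc : 1 ≤ c)
    (hx : |x| < 1) : x * deriv (rF21 a b c) x = b * (rF21 a (b + 1) c x - rF21 a b c x) := by
  have hA := abs_rF21Coeff_le_one ha hb hc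
  have hA' := abs_rF21Coeff_le_one ha hb' hc
  simp only [rF21_eq_tsum]
  have hcoeff : (fun n : ℕ => n * rF21Coeff a b c n * x ^ n) =
      fun n => b * (rF21Coeff a (b + 1) c n * x ^ n - rF21Coeff a b c n * x ^ n) := by
    funext n
    linear_combination (-x ^ n) * mul_rF21Coeff_add_one a b c n
  refine (hasSum_natCast_mul_mul_pow hA hx).unique ?_
  rw [hcoeff]
  exact ((summable_mul_pow hA' hx).hasSum.sub (summable_mul_pow hA hx).hasSum).mul_left b

lemma rF21Coeff_contiguous (hc : 0 < c) (n : ℕ) :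
    (n + 1) * rF21Coeff a b c (n + 1) - (c - b) * rF21Coeff a (b - 1) c (n + 1)
      - (b - c) * rF21Coeff a b c (n + 1) = (n + a) * rF21Coeff a b c n := by
  have hA := rF21Coeff_succ (a := a) (b := b) hc n
  have hB := rF21Coeff_succ (a := a) (b := b - 1) hc n
  have hAB := mul_rF21Coeff_add_one a (b - 1) c n
  rw [sub_add_cancel] at hAB
  have : (c + n) * (n + 1) ≠ 0 := by positivity
  refine mul_right_cancel₀ this ?_
  linear_combination (n + 1 - (b - c)) * hA - (c - b) * hB + (c - b) * (a + n) * hAB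

theorem mul_one_sub_mul_deriv_rF21 (ha : |a| ≤ 1) (hb : |b| ≤ 1) (hb' : |b - 1| ≤ 1)
    (hc : 1 ≤ c) (hx : |x| < 1) :
    x * (1 - x) * deriv (rF21 a b c) x =
      (c - b) * rF21 a (b - 1) c x + (b - c + a * x) * rF21 a b c x := by
  have hA := abs_rF21Coeff_le_one ha hb hc
  have hB := abs_rF21Coeff_le_one ha hb' hc
  have hN := hasSum_natCast_mul_mul_pow hA hx
  simp only [rF21_eq_tsum] at hN ⊢
  have hSA := (summable_mul_pow hA hx).hasSum
  have hSB := (summable_mul_pow hB hx).hasSum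
  have key := ((hN.sub (hSB.mul_left (c - b))).sub (hSA.mul_left (b - c))).eq_mul_of_succ
    (hN.add (hSA.mul_left a)) (by simp [rF21Coeff, rpoch]) fun n => by
      push_cast
      linear_combination
        x ^ (n + 1) * rF21Coeff_contiguous (a := a) (b := b) (c := c) (by linarith) n
  linear_combination key

end Hypergeometric

section Densities

variable {t : ℝ}

lemma abs_one_sub_sq_div_sixteen_lt_one (h0 : 0 < t) (h4 : t ≤ 4) : |1 - t ^ 2 / 16| < 1 := by
  rw [abs_lt]
  constructor <;> nlinarith

lemma hasDerivAt_rF21_one_sub_sq_div_sixteen {a b : ℝ} (ha : |a| ≤ 1) (hb : |b| ≤ 1)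
    (h0 : 0 < t) (h4 : t ≤ 4) :
    HasDerivAt (fun s => rF21 a b 1 (1 - s ^ 2 / 16))
      (deriv (rF21 a b 1) (1 - t ^ 2 / 16) * -(t / 8)) t := by
  have hx : HasDerivAt (fun s : ℝ => 1 - s ^ 2 / 16) (-(t / 8)) t := by
    refine (((hasDerivAt_pow 2 t).div_const 16).const_sub 1).congr_deriv ?_
    norm_num
    ring
  exact (differentiableAt_rF21 ha hb le_rfl
    (abs_one_sub_sq_div_sixteen_lt_one h0 h4)).hasDerivAt.comp t hx

lemma abs_half_le_one : |(1 / 2 : ℝ)| ≤ 1 := by norm_num [abs_of_pos]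

lemma abs_neg_half_le_one : |(-(1 / 2) : ℝ)| ≤ 1 := by norm_num [abs_of_pos]

theorem hasDerivAt_Fdens (h0 : 0 < t) (h4 : t < 4) :
    HasDerivAt Fdens ((t ^ 2 * Fdens t - 16 * Gdens t) / (t * (16 - t ^ 2))) t := by
  have hR := mul_one_sub_mul_deriv_rF21 abs_half_le_one abs_half_le_one
    (by norm_num [abs_of_pos]) le_rfl (abs_one_sub_sq_div_sixteen_lt_one h0 h4.le)
  rw [show (1 / 2 : ℝ) - 1 = -(1 / 2) by norm_num] at hR
  refine ((hasDerivAt_rF21_one_sub_sq_div_sixteen abs_half_le_one abs_half_le_one h0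
    h4.le).const_mul (1 / (2 * π))).congr_deriv ?_
  have : t * (16 - t ^ 2) ≠ 0 := by nlinarith
  unfold Fdens Gdens
  rw [eq_div_iff this]
  linear_combination (-16 / π) * hR

theorem hasDerivAt_Gdens (h0 : 0 < t) (h4 : t < 4) :
    HasDerivAt Gdens (t * (Fdens t - Gdens t) / (16 - t ^ 2)) t := by
  have hR := mul_deriv_rF21 abs_half_le_one abs_neg_half_le_one
    (by norm_num [abs_of_pos]) le_rfl (abs_one_sub_sq_div_sixteen_lt_one h0 h4.le)
  rw [show -(1 / 2 : ℝ) + 1 = 1 / 2 by norm_num] at hR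
  refine ((hasDerivAt_rF21_one_sub_sq_div_sixteen abs_half_le_one abs_neg_half_le_one h0
    h4.le).const_mul (1 / (2 * π))).congr_deriv ?_
  have : 16 - t ^ 2 ≠ 0 := by nlinarith
  unfold Fdens Gdens
  rw [eq_div_iff this]
  linear_combination (-t / π) * hR

lemma continuousOn_Fdens : ContinuousOn Fdens (Ioc 0 4) := fun _ ht =>
  ((hasDerivAt_rF21_one_sub_sq_div_sixteen abs_half_le_one abs_half_le_one ht.1
    ht.2).continuousAt.const_mul _).continuousWithinAt

lemma continuousOn_Gdens : ContinuousOn Gdens (Ioc 0 4) := fun _ ht =>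
  ((hasDerivAt_rF21_one_sub_sq_div_sixteen abs_half_le_one abs_neg_half_le_one ht.1
    ht.2).continuousAt.const_mul _).continuousWithinAt

lemma Fdens_four : Fdens 4 = 1 / (2 * π) := by norm_num [Fdens, rF21_zero]

lemma Gdens_four : Gdens 4 = 1 / (2 * π) := by norm_num [Gdens, rF21_zero]

end Densities

section Integrals

variable {φ : ℝ → ℝ} {a b k : ℝ}

theorem hasDerivAt_integral_left_of_continuousOn (hφ : ContinuousOn φ (Ioc a b))
    (hk : k ∈ Ioo a b) : HasDerivAt (fun u => ∫ t in u..b, φ t) (-φ k) k :=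
  intervalIntegral.integral_hasDerivAt_left
    ((hφ.mono (by rw [uIcc_of_le hk.2.le]; exact Icc_subset_Ioc hk.1 le_rfl)).intervalIntegrable)
    ((hφ.mono Ioo_subset_Ioc_self).stronglyMeasurableAtFilter isOpen_Ioo k hk)
    (hφ.continuousAt (Ioc_mem_nhds hk.1 hk.2))

theorem continuousOn_integral_left_of_continuousOn (hφ : ContinuousOn φ (Ioc a b))
    (hak : a < k) (hkb : k ≤ b) : ContinuousOn (fun u => ∫ t in u..b, φ t) (Icc k b) := by
  have hsub : Icc k b ⊆ Ioc a b := Icc_subset_Ioc hak le_rfl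
  rw [← uIcc_of_le hkb] at hsub ⊢
  exact intervalIntegral.continuousOn_primitive_interval_left
    ((hφ.mono hsub).integrableOn_compact isCompact_uIcc)

end Integrals

lemma continuousOn_pow_mul_Fdens (n : ℕ) :
    ContinuousOn (fun t => t ^ (2 * n) * Fdens t) (Ioc 0 4) :=
  (continuousOn_pow _).mul continuousOn_Fdens

lemma continuousOn_pow_mul_log_mul_Fdens (n : ℕ) :
    ContinuousOn (fun t => t ^ (2 * n) * Real.log t * Fdens t) (Ioc 0 4) :=
  ((continuousOn_pow _).mul (continuousOn_log.mono fun _ ht => ht.1.ne')).mul continuousOn_Fdens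

lemma hasDerivAt_cInt (n : ℕ) {k : ℝ} (hk : k ∈ Ioo 0 4) :
    HasDerivAt (cInt n) (-(k ^ (2 * n) * Fdens k)) k :=
  hasDerivAt_integral_left_of_continuousOn (continuousOn_pow_mul_Fdens n) hk

lemma hasDerivAt_dInt (n : ℕ) {k : ℝ} (hk : k ∈ Ioo 0 4) :
    HasDerivAt (dInt n) (-(k ^ (2 * n) * Real.log k * Fdens k)) k :=
  hasDerivAt_integral_left_of_continuousOn (continuousOn_pow_mul_log_mul_Fdens n) hk

lemma continuousOn_cInt (n : ℕ) {k : ℝ} (hk0 : 0 < k) (hk4 : k ≤ 4) :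
    ContinuousOn (cInt n) (Icc k 4) :=
  continuousOn_integral_left_of_continuousOn (continuousOn_pow_mul_Fdens n) hk0 hk4

lemma continuousOn_dInt (n : ℕ) {k : ℝ} (hk0 : 0 < k) (hk4 : k ≤ 4) :
    ContinuousOn (dInt n) (Icc k 4) :=
  continuousOn_integral_left_of_continuousOn (continuousOn_pow_mul_log_mul_Fdens n) hk0 hk4

lemma cInt_four (n : ℕ) : cInt n 4 = 0 := intervalIntegral.integral_same

lemma dInt_four (n : ℕ) : dInt n 4 = 0 := intervalIntegral.integral_same

theorem eq_zero_of_hasDerivAt_eq_zero {H : ℝ → ℝ} {a b : ℝ} (hab : a ≤ b)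
    (hcont : ContinuousOn H (Icc a b)) (hderiv : ∀ y ∈ Ioo a b, HasDerivAt H 0 y)
    (hb : H b = 0) : H a = 0 := by
  rcases hab.eq_or_lt with rfl | hlt
  · exact hb
  obtain ⟨c, -, hc⟩ := exists_hasDerivAt_eq_slope H (fun _ => 0) hlt hcont hderiv
  rw [hb, eq_comm, div_eq_zero_iff, sub_eq_zero] at hc
  exact (hc.resolve_right (sub_ne_zero.mpr hlt.ne')).symm

theorem cInt_relation {k : ℝ} (hk0 : 0 < k) (hk4 : k ≤ 4) :
    8 * cInt 0 k - 2 * cInt 1 k + k * (8 - k ^ 2) * Fdens k + 8 * k * Gdens k = 0 := by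
  refine eq_zero_of_hasDerivAt_eq_zero (H := fun k => 8 * cInt 0 k - 2 * cInt 1 k
    + k * (8 - k ^ 2) * Fdens k + 8 * k * Gdens k) hk4 ?_ (fun y hy => ?_) ?_
  · have := continuousOn_cInt 0 hk0 hk4
    have := continuousOn_cInt 1 hk0 hk4
    have := continuousOn_Fdens.mono (Icc_subset_Ioc hk0 le_rfl)
    have := continuousOn_Gdens.mono (Icc_subset_Ioc hk0 le_rfl)
    fun_prop
  · have hy' : y ∈ Ioo 0 4 := ⟨hk0.trans hy.1, hy.2⟩
    have hy0 : y ≠ 0 := hy'.1.ne'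
    have h16 : 16 - y ^ 2 ≠ 0 := by nlinarith [hy'.1, hy'.2]
    refine ((((hasDerivAt_cInt 0 hy').const_mul 8).sub ((hasDerivAt_cInt 1 hy').const_mul 2)).add
      (((hasDerivAt_id' y).fun_mul ((hasDerivAt_pow 2 y).const_sub 8)).mul
        (hasDerivAt_Fdens hy'.1 hy'.2))).add
      (((hasDerivAt_id' y).const_mul 8).fun_mul (hasDerivAt_Gdens hy'.1 hy'.2)) |>.congr_deriv ?_
    field_simp
    ring
  · simp only [cInt_four, Fdens_four, Gdens_four]
    ring

theorem cInt_two_relation {k : ℝ} (hk0 : 0 < k) (hk4 : k ≤ 4) :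
    120 * k ^ 2 * cInt 0 k - 30 * (k ^ 2 + 12) * cInt 1 k + 40 * cInt 2 k
      - 5 * k ^ 5 * Fdens k + 80 * k ^ 3 * Gdens k = 0 := by
  refine eq_zero_of_hasDerivAt_eq_zero (H := fun k => 120 * k ^ 2 * cInt 0 k
    - 30 * (k ^ 2 + 12) * cInt 1 k + 40 * cInt 2 k - 5 * k ^ 5 * Fdens k
    + 80 * k ^ 3 * Gdens k) hk4 ?_ (fun y hy => ?_) ?_
  · have := continuousOn_cInt 0 hk0 hk4
    have := continuousOn_cInt 1 hk0 hk4
    have := continuousOn_cInt 2 hk0 hk4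
    have := continuousOn_Fdens.mono (Icc_subset_Ioc hk0 le_rfl)
    have := continuousOn_Gdens.mono (Icc_subset_Ioc hk0 le_rfl)
    fun_prop
  · have hy' : y ∈ Ioo 0 4 := ⟨hk0.trans hy.1, hy.2⟩
    have hy0 : y ≠ 0 := hy'.1.ne'
    have h16 : 16 - y ^ 2 ≠ 0 := by nlinarith [hy'.1, hy'.2]
    have hc1 : cInt 1 y = 4 * cInt 0 y + (y * (8 - y ^ 2) * Fdens y + 8 * y * Gdens y) / 2 := by
      linear_combination -(cInt_relation hy'.1 hy'.2.le) / 2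
    refine ((((((hasDerivAt_pow 2 y).const_mul 120).fun_mul (hasDerivAt_cInt 0 hy')).sub
      ((((hasDerivAt_pow 2 y).add_const 12).const_mul 30).fun_mul (hasDerivAt_cInt 1 hy'))).add
      ((hasDerivAt_cInt 2 hy').const_mul 40)).sub
      (((hasDerivAt_pow 5 y).const_mul 5).fun_mul (hasDerivAt_Fdens hy'.1 hy'.2))).add
      (((hasDerivAt_pow 3 y).const_mul 80).fun_mul (hasDerivAt_Gdens hy'.1 hy'.2))
      |>.congr_deriv ?_
    rw [hc1]
    field_simp
    ring
  · simp only [cInt_four, Fdens_four, Gdens_four]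
    ring

theorem dInt_relation {k : ℝ} (hk0 : 0 < k) (hk4 : k ≤ 4) :
    16 * cInt 0 k + 16 * dInt 0 k - 4 * dInt 1 k + (4 * cInt 1 k - 16 * cInt 0 k) * Real.log k
      + k ^ 3 * Fdens k - 16 * k * Gdens k = 0 := by
  refine eq_zero_of_hasDerivAt_eq_zero (H := fun k => 16 * cInt 0 k + 16 * dInt 0 k
    - 4 * dInt 1 k + (4 * cInt 1 k - 16 * cInt 0 k) * Real.log k
    + k ^ 3 * Fdens k - 16 * k * Gdens k) hk4 ?_ (fun y hy => ?_) ?_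
  · have := continuousOn_cInt 0 hk0 hk4
    have := continuousOn_cInt 1 hk0 hk4
    have := continuousOn_dInt 0 hk0 hk4
    have := continuousOn_dInt 1 hk0 hk4
    have := continuousOn_Fdens.mono (Icc_subset_Ioc hk0 le_rfl)
    have := continuousOn_Gdens.mono (Icc_subset_Ioc hk0 le_rfl)
    have := continuousOn_log.mono fun t (ht : t ∈ Icc k 4) => (hk0.trans_le ht.1).ne'
    fun_prop
  · have hy' : y ∈ Ioo 0 4 := ⟨hk0.trans hy.1, hy.2⟩
    have hy0 : y ≠ 0 := hy'.1.ne'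
    have h16 : 16 - y ^ 2 ≠ 0 := by nlinarith [hy'.1, hy'.2]
    have hc1 : cInt 1 y = 4 * cInt 0 y + (y * (8 - y ^ 2) * Fdens y + 8 * y * Gdens y) / 2 := by
      linear_combination -(cInt_relation hy'.1 hy'.2.le) / 2
    refine ((((((hasDerivAt_cInt 0 hy').const_mul 16).add
      ((hasDerivAt_dInt 0 hy').const_mul 16)).sub ((hasDerivAt_dInt 1 hy').const_mul 4)).add
      ((((hasDerivAt_cInt 1 hy').const_mul 4).fun_sub
        ((hasDerivAt_cInt 0 hy').const_mul 16)).fun_mul (hasDerivAt_log hy0))).add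
      ((hasDerivAt_pow 3 y).fun_mul (hasDerivAt_Fdens hy'.1 hy'.2))).sub
      (((hasDerivAt_id' y).const_mul 16).fun_mul (hasDerivAt_Gdens hy'.1 hy'.2))
      |>.congr_deriv ?_
    rw [hc1]
    field_simp
    ring
  · simp only [cInt_four, dInt_four, Fdens_four, Gdens_four]
    ring

theorem three_linear_identities (k : ℝ) (hk0 : 0 < k) (hk4 : k < 4) :
    (0 = (20 / k) * cInt 0 k - (3 * (k ^ 2 + 12) / k ^ 3) * cInt 1 k +
        (4 / k ^ 3) * cInt 2 k + (8 / k) * dInt 0 k - (2 / k) * dInt 1 k +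
        (8 - k ^ 2) * Real.log k * Fdens k + 8 * Real.log k * Gdens k) ∧
    (0 = (120 / k ^ 3) * cInt 0 k - (30 * (k ^ 2 + 12) / k ^ 5) * cInt 1 k +
        (40 / k ^ 5) * cInt 2 k - 5 * Fdens k + (80 / k ^ 2) * Gdens k) ∧
    (0 = (8 / k) * cInt 0 k - (2 / k) * cInt 1 k + (8 - k ^ 2) * Fdens k + 8 * Gdens k) := by
  have h1 := cInt_relation hk0 hk4.le
  have h2 := cInt_two_relation hk0 hk4.le
  have hd := dInt_relation hk0 hk4.le
  have hk : k ≠ 0 := hk0.ne'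
  refine ⟨?_, ?_, ?_⟩ <;> field_simp
  · linear_combination -h2 / 10 - k ^ 2 * Real.log k * h1 - k ^ 2 / 2 * hd
  · linear_combination -h2
  · linear_combination -h1
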